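/- Let f, g be continuous functions on [a,b] with m_f ≤ f ≤ M_f and m_g ≤ g ≤ M_g. Then |(1/(b−a))∫ₐᵇ f(t)g(t) dt − (1/(b−a))²(∫ₐᵇ f(t) dt)(∫ₐᵇ g(t) dt)| ≤ (1/4)(M_f − m_f)(M_g − m_g). -/

import Mathlib

/-!
Under the uniform probability measure on `[a, b]` the left-hand side is `|Cov(f, g)|`.
Cauchy–Schwarz in `L²` gives `Cov(f, g)² ≤ Var f · Var g`, and by Popoviciu's inequality a
random variable with values in `[m, M]` has variance at most `((M - m) / 2)²`.
-/

open MeasureTheory ProbabilityTheory Set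

variable {Ω : Type*} {mΩ : MeasurableSpace Ω} {μ : Measure Ω} {X Y : Ω → ℝ}

lemma MeasureTheory.MemLp.inner_toLp_eq_integral_mul (hX : MemLp X 2 μ) (hY : MemLp Y 2 μ) :
    inner ℝ (hX.toLp X) (hY.toLp Y) = ∫ ω, X ω * Y ω ∂μ := by
  rw [L2.inner_def]
  refine integral_congr_ae ?_
  filter_upwards [hX.coeFn_toLp, hY.coeFn_toLp] with ω hXω hYω
  simp [hXω, hYω, mul_comm]

lemma MeasureTheory.sq_integral_mul_le_integral_sq_mul_integral_sq (hX : MemLp X 2 μ)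
    (hY : MemLp Y 2 μ) :
    (∫ ω, X ω * Y ω ∂μ) ^ 2 ≤ (∫ ω, X ω ^ 2 ∂μ) * ∫ ω, Y ω ^ 2 ∂μ := by
  simpa only [MemLp.inner_toLp_eq_integral_mul, ← sq] using
    real_inner_mul_inner_self_le (hX.toLp X) (hY.toLp Y)

namespace ProbabilityTheory

lemma sq_covariance_le_variance_mul_variance [IsFiniteMeasure μ] (hX : MemLp X 2 μ)
    (hY : MemLp Y 2 μ) : cov[X, Y; μ] ^ 2 ≤ Var[X; μ] * Var[Y; μ] := by
  rw [covariance, variance_eq_integral hX.aemeasurable, variance_eq_integral hY.aemeasurable]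
  exact sq_integral_mul_le_integral_sq_mul_integral_sq (hX.sub (memLp_const _))
    (hY.sub (memLp_const _))

lemma abs_covariance_le_of_bounded [IsProbabilityMeasure μ] {mX MX mY MY : ℝ}
    (hXb : ∀ᵐ ω ∂μ, X ω ∈ Icc mX MX) (hYb : ∀ᵐ ω ∂μ, Y ω ∈ Icc mY MY)
    (hX : AEMeasurable X μ) (hY : AEMeasurable Y μ) :
    |cov[X, Y; μ]| ≤ (MX - mX) * (MY - mY) / 4 := by
  obtain ⟨_, hmX, hMX⟩ := hXb.exists
  obtain ⟨_, hmY, hMY⟩ := hYb.exists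
  refine abs_le_of_sq_le_sq ?_ (by nlinarith)
  calc cov[X, Y; μ] ^ 2 ≤ Var[X; μ] * Var[Y; μ] :=
        sq_covariance_le_variance_mul_variance (memLp_of_bounded hXb hX.aestronglyMeasurable 2)
          (memLp_of_bounded hYb hY.aestronglyMeasurable 2)
    _ ≤ ((MX - mX) / 2) ^ 2 * ((MY - mY) / 2) ^ 2 :=
        mul_le_mul (variance_le_sq_of_bounded hXb hX) (variance_le_sq_of_bounded hYb hY)
          (variance_nonneg _ _) (sq_nonneg _)
    _ = ((MX - mX) * (MY - mY) / 4) ^ 2 := by ring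

lemma integral_cond_Icc {a b : ℝ} (hab : a ≤ b) (f : ℝ → ℝ) :
    ∫ t, f t ∂(volume[|Icc a b]) = (b - a)⁻¹ * ∫ t in a..b, f t := by
  rw [ProbabilityTheory.cond, integral_smul_measure, Real.volume_Icc,
    integral_Icc_eq_integral_Ioc, ← intervalIntegral.integral_of_le hab, ENNReal.toReal_inv,
    ENNReal.toReal_ofReal (by linarith), smul_eq_mul]

end ProbabilityTheory

theorem gruss_classical (a b : ℝ) (hab : a < b) (f g : ℝ → ℝ)
    (hf : ContinuousOn f (Set.Icc a b)) (hg : ContinuousOn g (Set.Icc a b))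
    (mf Mf mg Mg : ℝ)
    (hfb : ∀ t ∈ Set.Icc a b, mf ≤ f t ∧ f t ≤ Mf)
    (hgb : ∀ t ∈ Set.Icc a b, mg ≤ g t ∧ g t ≤ Mg) :
    |(1 / (b - a)) * ∫ t in a..b, f t * g t -
      (1 / (b - a)) ^ 2 * (∫ t in a..b, f t) * (∫ t in a..b, g t)| ≤
      (1 / 4) * (Mf - mf) * (Mg - mg) := by
  set μ := volume[|Icc a b]
  have : IsProbabilityMeasure μ := cond_isProbabilityMeasure_of_finite (by simp [hab]) (by simp)
  have hfb' : ∀ᵐ t ∂μ, f t ∈ Icc mf Mf := ae_cond_of_forall_mem measurableSet_Icc hfb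
  have hgb' : ∀ᵐ t ∂μ, g t ∈ Icc mg Mg := ae_cond_of_forall_mem measurableSet_Icc hgb
  have hfm : AEMeasurable f μ := (hf.aemeasurable measurableSet_Icc).smul_measure _
  have hgm : AEMeasurable g μ := (hg.aemeasurable measurableSet_Icc).smul_measure _
  have hf2 : MemLp f 2 μ := memLp_of_bounded hfb' hfm.aestronglyMeasurable 2
  have hg2 : MemLp g 2 μ := memLp_of_bounded hgb' hgm.aestronglyMeasurable 2
  -- The binder of the first integral in the statement extends over the subtracted constant.
  rw [one_div, ← integral_cond_Icc hab.le, integral_sub (f := fun t ↦ f t * g t)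
    (hf2.integrable_mul hg2) (integrable_const _), integral_const, probReal_univ, one_smul]
  calc _ = |cov[f, g; μ]| := by
        rw [covariance_eq_sub hf2 hg2, integral_cond_Icc hab.le f, integral_cond_Icc hab.le g]
        simp only [Pi.mul_apply]
        ring_nf
    _ ≤ (Mf - mf) * (Mg - mg) / 4 := abs_covariance_le_of_bounded hfb' hgb' hfm hgm
    _ = 1 / 4 * (Mf - mf) * (Mg - mg) := by ring
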